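/- Under hypotheses (H), the limit P := lim_{s→∞} g(s)ⁿ·E(s)^{(p−2)/2}·f'(s) exists and satisfies 0 < P < +∞. Consequently f'(s) is asymptotically equivalent to P·E(s)^{(2−p)/2}·g(s)^{−n} as s → +∞, i.e. lim_{s→∞} f'(s)·E(s)^{(p−2)/2}·g(s)ⁿ/P = 1. -/

import Mathlib

/-!
The equation is the divergence form `Q' = n gⁿ⁻² |dF|^{p-2} j(f) j'(f) ≥ 0` of the flux
`Q = gⁿ |dF|^{p-2} f'`, so `Q` is positive and nondecreasing, and everything comes down to
bounding it. Since `f` is bounded, so is `j(f) j'(f)`; together with `|dF|² ≤ f'² + C g⁻²`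
and `gⁿ f'^{p-1} ≤ Q` this gives `Q' ≤ K (Q + 1)^β g^{n-p}` with `β = (p-2)/(p-1) < 1`
(here `p ≤ n + 1` makes `g^{n-2-nβ} ≤ g^{n-p}`), and `g ≳ s^δ` turns the right side into
`K' (Q + 1)^β s^{δ(n-p)}` with `δ(n-p) < -1`. Comparing `(Q + 1)^{1-β}` with the integrable
`s^{δ(n-p)}` bounds `Q`.
-/

open Real Filter Topology

/-- Squared energy density `|dF|²(s) = f'(s)² + n · j(f(s))² / g(s)²` of the rotationally
symmetric map `F(s,θ) = (f(s),θ)` between `M_g` and `N_j`. -/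
noncomputable def energyDensitySq (n : ℕ) (g j f : ℝ → ℝ) (s : ℝ) : ℝ :=
  (deriv f s) ^ 2 + (n : ℝ) * (j (f s)) ^ 2 / (g s) ^ 2

/-- `f` solves the rotationally symmetric `p`-harmonic equation `τ_p(F) = 0`. -/
def SolvesPHarmonic (n : ℕ) (p : ℝ) (g j f : ℝ → ℝ) : Prop :=
  ∀ s : ℝ, 0 < s → 0 < energyDensitySq n g j f s →
    deriv (deriv f) s
      + ((n : ℝ) / (g s) ^ 2) * (g s * deriv g s * deriv f s - j (f s) * deriv j (f s))
      + (p - 2) * (energyDensitySq n g j f s)⁻¹ * deriv f s *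
          (deriv f s * deriv (deriv f) s
            + (n : ℝ) * (j (f s) / (g s) ^ 3) *
                (deriv j (f s) * deriv f s * g s - j (f s) * deriv g s)) = 0

open Set

lemma Real.add_rpow_le_two_rpow_mul_rpow_add_rpow {x y c : ℝ} (hx : 0 ≤ x) (hy : 0 ≤ y)
    (hc : 0 ≤ c) : (x + y) ^ c ≤ 2 ^ c * (x ^ c + y ^ c) := calc
  (x + y) ^ c ≤ (2 * max x y) ^ c := by
    gcongr; rw [two_mul]; exact add_le_add (le_max_left _ _) (le_max_right _ _)
  _ = 2 ^ c * max x y ^ c := mul_rpow zero_le_two (hx.trans (le_max_left _ _))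
  _ ≤ 2 ^ c * (x ^ c + y ^ c) := by
    gcongr
    rcases max_choice x y with h | h <;> rw [h] <;>
      linarith [rpow_nonneg hx c, rpow_nonneg hy c]

lemma MonotoneOn.tendsto_atTop_csSup_image_Ici {u : ℝ → ℝ} {a : ℝ}
    (hu : MonotoneOn u (Ici a)) (hb : BddAbove (u '' Ici a)) :
    Tendsto u atTop (𝓝 (sSup (u '' Ici a))) := by
  have hrange : range (fun s => u (max a s)) = u '' Ici a := by
    ext y
    constructor
    · rintro ⟨s, rfl⟩; exact mem_image_of_mem u (le_max_left a s)
    · rintro ⟨s, hs, rfl⟩; exact ⟨s, by simp only [max_eq_right (mem_Ici.1 hs)]⟩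
  have hmono : Monotone fun s => u (max a s) := fun x y hxy =>
    hu (mem_Ici.2 (le_max_left _ _)) (mem_Ici.2 (le_max_left _ _)) (max_le_max le_rfl hxy)
  have hlim := tendsto_atTop_ciSup hmono (hrange ▸ hb)
  rw [← sSup_range, hrange] at hlim
  exact hlim.congr' (eventually_ge_atTop a |>.mono fun s hs => by rw [max_eq_right hs])

/-- Bihari-type comparison: `u ^ (1 - β) - (1 - β) H` is nonincreasing. -/
theorem bddAbove_image_Ici_of_hasDerivAt_le_rpow_mul {u u' H h : ℝ → ℝ} {β s₀ : ℝ}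
    (hβ : β < 1) (hu : ∀ s ≥ s₀, HasDerivAt u (u' s) s)
    (hH : ∀ s ≥ s₀, HasDerivAt H (h s) s) (hpos : ∀ s ≥ s₀, 0 < u s)
    (hle : ∀ s ≥ s₀, u' s ≤ u s ^ β * h s)
    (hHbdd : BddAbove (H '' Ici s₀)) : BddAbove (u '' Ici s₀) := by
  obtain ⟨M, hM⟩ := hHbdd
  have hγ : 0 < 1 - β := sub_pos.2 hβ
  set W := fun s => u s ^ (1 - β) - (1 - β) * H s
  have hW : ∀ s ≥ s₀,
      HasDerivAt W (u' s * (1 - β) * u s ^ (1 - β - 1) - (1 - β) * h s) s := fun s hs =>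
    ((hu s hs).rpow_const (Or.inl (hpos s hs).ne')).sub ((hH s hs).const_mul _)
  have hW' : ∀ s ≥ s₀, u' s * (1 - β) * u s ^ (1 - β - 1) - (1 - β) * h s ≤ 0 := by
    intro s hs
    have hβpow : 0 < u s ^ β := rpow_pos_of_pos (hpos s hs) β
    have : u s ^ (1 - β - 1) = (u s ^ β)⁻¹ := by
      rw [show 1 - β - 1 = -β by ring, rpow_neg (hpos s hs).le]
    rw [this, sub_nonpos, mul_comm (u' s), mul_assoc]
    gcongr
    rw [← div_eq_mul_inv, div_le_iff₀' hβpow]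
    exact hle s hs
  have hanti : AntitoneOn W (Ici s₀) := by
    refine antitoneOn_of_hasDerivWithinAt_nonpos (convex_Ici s₀)
      (f' := fun s => u' s * (1 - β) * u s ^ (1 - β - 1) - (1 - β) * h s)
      (fun s hs => (hW s hs).continuousAt.continuousWithinAt) (fun s hs => ?_) (fun s hs => ?_)
    all_goals rw [interior_Ici] at hs
    · exact (hW s (le_of_lt hs)).hasDerivWithinAt
    · exact hW' s (le_of_lt hs)
  refine ⟨(W s₀ + (1 - β) * M) ^ (1 - β)⁻¹, ?_⟩
  rintro _ ⟨s, hs, rfl⟩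
  have hbound : u s ^ (1 - β) ≤ W s₀ + (1 - β) * M := by
    have := hanti self_mem_Ici hs hs
    have := hM (mem_image_of_mem H hs)
    simp only [W] at *
    nlinarith
  calc u s = (u s ^ (1 - β)) ^ (1 - β)⁻¹ := by
        rw [← rpow_mul (hpos s hs).le, mul_inv_cancel₀ hγ.ne', rpow_one]
    _ ≤ _ := rpow_le_rpow (rpow_nonneg (hpos s hs).le _) hbound (inv_nonneg.2 hγ.le)

theorem bddAbove_image_Ici_of_hasDerivAt_le_add_one_rpow_mul_rpow {u u' : ℝ → ℝ}
    {β K e s₀ : ℝ} (hβ : β < 1) (hK : 0 ≤ K) (he : e < -1) (hs₀ : 0 < s₀)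
    (hu : ∀ s ≥ s₀, HasDerivAt u (u' s) s) (hu₀ : ∀ s ≥ s₀, 0 ≤ u s)
    (hle : ∀ s ≥ s₀, u' s ≤ (u s + 1) ^ β * (K * s ^ e)) : BddAbove (u '' Ici s₀) := by
  have he' : e + 1 < 0 := by linarith
  set H := fun s : ℝ => K / (e + 1) * s ^ (e + 1)
  have hH : ∀ s ≥ s₀, HasDerivAt H (K * s ^ e) s := fun s hs => by
    have hd := (hasDerivAt_rpow_const (p := e + 1) (Or.inl (hs₀.trans_le hs).ne')).const_mul
      (K / (e + 1))
    rwa [add_sub_cancel_right, ← mul_assoc, div_mul_cancel₀ _ he'.ne] at hd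
  have hHbdd : BddAbove (H '' Ici s₀) := ⟨0, by
    rintro _ ⟨s, hs, rfl⟩
    exact mul_nonpos_of_nonpos_of_nonneg (div_nonpos_of_nonneg_of_nonpos hK he'.le)
      (rpow_nonneg (hs₀.le.trans hs) _)⟩
  obtain ⟨M, hM⟩ := bddAbove_image_Ici_of_hasDerivAt_le_rpow_mul hβ (u := fun s => u s + 1)
    (fun s hs => (hu s hs).add_const 1) hH (fun s hs => by linarith [hu₀ s hs]) hle hHbdd
  exact ⟨M - 1, fun _ ⟨s, hs, hus⟩ => by linarith [hM ⟨s, hs, rfl⟩]⟩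

lemma eventually_half_mul_rpow_le_of_tendsto_div {g : ℝ → ℝ} {C δ : ℝ} (hC : 0 < C)
    (hδ : 0 < δ) (h : Tendsto (fun s => g s / (C * s ^ δ)) atTop (𝓝 1)) :
    ∀ᶠ s in atTop, C / 2 * s ^ δ ≤ g s ∧ 1 ≤ g s := by
  have hpow := (tendsto_rpow_atTop hδ).const_mul_atTop (half_pos hC)
  filter_upwards [h.eventually (eventually_gt_nhds one_half_lt_one), hpow.eventually_ge_atTop 1,
    eventually_gt_atTop 0] with s hs hs1 hs0
  rw [lt_div_iff₀ (by positivity)] at hs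
  exact ⟨by linarith, hs1.trans (by linarith)⟩

lemma sq_rpow_div_two {x : ℝ} (hx : 0 ≤ x) (q : ℝ) : (x ^ 2) ^ (q / 2) = x ^ q := by
  rw [← rpow_natCast, ← rpow_mul hx, Nat.cast_ofNat, mul_div_cancel₀ _ two_ne_zero]

lemma rpow_sub_two_le_of_sq_le {n : ℕ} {p G F' E : ℝ} (hp : 2 < p) (hG : 0 < G)
    (hF' : 0 < F') (hE : F' ^ 2 ≤ E) :
    F' ^ (p - 2) ≤ (G ^ n * E ^ ((p - 2) / 2) * F') ^ ((p - 2) / (p - 1)) *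
      G ^ (-(n * ((p - 2) / (p - 1)))) := by
  have hp1 : 0 < p - 1 := by linarith
  have hGn : 0 < G ^ n := pow_pos hG n
  have hE0 : 0 < E := (pow_pos hF' 2).trans_le hE
  have hflux : G ^ n * F' ^ (p - 1) ≤ G ^ n * E ^ ((p - 2) / 2) * F' := by
    rw [mul_assoc, show p - 1 = p - 2 + 1 by ring, rpow_add_one hF'.ne',
      ← sq_rpow_div_two hF'.le]
    gcongr
  calc F' ^ (p - 2) = (F' ^ (p - 1)) ^ ((p - 2) / (p - 1)) := by
        rw [← rpow_mul hF'.le, mul_div_cancel₀ _ hp1.ne']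
    _ ≤ ((G ^ n * E ^ ((p - 2) / 2) * F') / G ^ n) ^ ((p - 2) / (p - 1)) := by
        gcongr
        rw [le_div_iff₀' hGn]; exact hflux
    _ = _ := by
        rw [div_rpow (by positivity) hGn.le, ← rpow_natCast, ← rpow_mul hG.le, rpow_neg hG.le,
          div_eq_mul_inv]

lemma pow_div_sq_mul_rpow_le {n : ℕ} {p G F' E C : ℝ} (hp : 2 < p) (hpn : p ≤ n + 1)
    (hG : 1 ≤ G) (hF' : 0 < F') (hC : 0 ≤ C) (hE₁ : F' ^ 2 ≤ E)
    (hE₂ : E ≤ F' ^ 2 + C / G ^ 2) :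
    G ^ n / G ^ 2 * E ^ ((p - 2) / 2) ≤ 2 ^ ((p - 2) / 2) * (1 + C ^ ((p - 2) / 2)) *
      (G ^ n * E ^ ((p - 2) / 2) * F' + 1) ^ ((p - 2) / (p - 1)) * G ^ ((n : ℝ) - p) := by
  set α := (p - 2) / 2
  set β := (p - 2) / (p - 1)
  set Q := G ^ n * E ^ α * F'
  have hG0 : 0 < G := one_pos.trans_le hG
  have hp1 : 0 < p - 1 := by linarith
  have hQ : 0 ≤ Q := by have := (pow_pos hF' 2).trans_le hE₁; positivity
  have hQβ : Q ^ β ≤ (Q + 1) ^ β := by gcongr; linarith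
  have hQβ1 : 1 ≤ (Q + 1) ^ β := one_le_rpow (by linarith) (by positivity)
  have hEα : E ^ α ≤ 2 ^ α * (F' ^ (p - 2) + C ^ α / G ^ (p - 2)) := calc
    E ^ α ≤ (F' ^ 2 + C / G ^ 2) ^ α := by gcongr; exact (pow_pos hF' 2).le.trans hE₁
    _ ≤ 2 ^ α * ((F' ^ 2) ^ α + (C / G ^ 2) ^ α) :=
      Real.add_rpow_le_two_rpow_mul_rpow_add_rpow (by positivity) (by positivity) (by positivity)
    _ = 2 ^ α * (F' ^ (p - 2) + C ^ α / G ^ (p - 2)) := by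
      rw [div_rpow hC (by positivity), sq_rpow_div_two hF'.le, sq_rpow_div_two hG0.le]
  have hexp : (n : ℝ) - 2 - n * β ≤ n - p := by
    have : p - 2 ≤ n * β := by
      rw [← mul_div_assoc, le_div_iff₀ hp1]; nlinarith
    linarith
  have hF'pow : G ^ ((n : ℝ) - 2) * F' ^ (p - 2) ≤ (Q + 1) ^ β * G ^ ((n : ℝ) - p) := calc
    G ^ ((n : ℝ) - 2) * F' ^ (p - 2)
        ≤ G ^ ((n : ℝ) - 2) * ((Q + 1) ^ β * G ^ (-(n * β))) := by
      gcongr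
      exact (rpow_sub_two_le_of_sq_le hp hG0 hF' hE₁).trans (by gcongr)
    _ = (Q + 1) ^ β * G ^ ((n : ℝ) - 2 - n * β) := by
      rw [sub_eq_add_neg _ (n * β), rpow_add hG0]; ring
    _ ≤ (Q + 1) ^ β * G ^ ((n : ℝ) - p) := by gcongr
  calc G ^ n / G ^ 2 * E ^ α = G ^ ((n : ℝ) - 2) * E ^ α := by
        rw [rpow_sub hG0, rpow_natCast, rpow_two]
    _ ≤ G ^ ((n : ℝ) - 2) * (2 ^ α * (F' ^ (p - 2) + C ^ α / G ^ (p - 2))) := by gcongr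
    _ = 2 ^ α * (G ^ ((n : ℝ) - 2) * F' ^ (p - 2) + C ^ α * G ^ ((n : ℝ) - p)) := by
      rw [show (n : ℝ) - p = n - 2 - (p - 2) by ring, rpow_sub hG0 (n - 2)]; ring
    _ ≤ 2 ^ α * ((Q + 1) ^ β * G ^ ((n : ℝ) - p) +
          C ^ α * ((Q + 1) ^ β * G ^ ((n : ℝ) - p))) := by
      gcongr
      exact le_mul_of_one_le_left (by positivity) hQβ1
    _ = _ := by ring

noncomputable def pFlux (n : ℕ) (p : ℝ) (g j f : ℝ → ℝ) (s : ℝ) : ℝ :=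
  g s ^ n * energyDensitySq n g j f s ^ ((p - 2) / 2) * deriv f s

noncomputable def pFluxSource (n : ℕ) (p : ℝ) (g j f : ℝ → ℝ) (s : ℝ) : ℝ :=
  n * g s ^ n / g s ^ 2 * (j (f s) * deriv j (f s)) * energyDensitySq n g j f s ^ ((p - 2) / 2)

section

variable {n : ℕ} {p : ℝ} {g j f : ℝ → ℝ} {s : ℝ}

lemma sq_deriv_le_energyDensitySq : deriv f s ^ 2 ≤ energyDensitySq n g j f s :=
  le_add_of_nonneg_right (by positivity)

lemma energyDensitySq_pos (hf' : deriv f s ≠ 0) : 0 < energyDensitySq n g j f s :=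
  (pow_two_pos_of_ne_zero hf').trans_le sq_deriv_le_energyDensitySq

lemma energyDensitySq_le {J : ℝ} (hj₀ : 0 ≤ j (f s)) (hj : j (f s) ≤ J) :
    energyDensitySq n g j f s ≤ deriv f s ^ 2 + n * J ^ 2 / g s ^ 2 := by
  unfold energyDensitySq
  gcongr

lemma pFlux_pos (hg : 0 < g s) (hf' : 0 < deriv f s) : 0 < pFlux n p g j f s := by
  have := energyDensitySq_pos (n := n) (g := g) (j := j) hf'.ne'
  unfold pFlux
  positivity

lemma pFluxSource_nonneg (hg : 0 < g s) (hf' : deriv f s ≠ 0) (hj : 0 ≤ j (f s))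
    (hj' : 0 ≤ deriv j (f s)) : 0 ≤ pFluxSource n p g j f s := by
  have := energyDensitySq_pos (n := n) (g := g) (j := j) hf'
  unfold pFluxSource
  positivity

lemma hasDerivAt_energyDensitySq (hf : DifferentiableAt ℝ f s)
    (hf' : DifferentiableAt ℝ (deriv f) s) (hg : DifferentiableAt ℝ g s)
    (hj : DifferentiableAt ℝ j (f s)) (hgs : g s ≠ 0) :
    HasDerivAt (energyDensitySq n g j f)
      (2 * deriv f s * deriv (deriv f) s + n * (2 * j (f s) * (deriv j (f s) * deriv f s) * g s ^ 2
        - j (f s) ^ 2 * (2 * g s * deriv g s)) / (g s ^ 2) ^ 2) s := by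
  have hjf := hj.hasDerivAt.comp s hf.hasDerivAt
  have h := (hf'.hasDerivAt.pow 2).add
    (((hjf.pow 2).const_mul (n : ℝ)).div (hg.hasDerivAt.pow 2) (pow_ne_zero 2 hgs))
  refine (h : HasDerivAt (energyDensitySq n g j f) _ s).congr_deriv ?_
  simp only [Pi.pow_apply, Function.comp_apply]
  ring

/-- The `p`-harmonic equation is the divergence form `(pFlux)' = pFluxSource`. -/
lemma hasDerivAt_pFlux (hf : DifferentiableAt ℝ f s)
    (hf' : DifferentiableAt ℝ (deriv f) s) (hg : DifferentiableAt ℝ g s)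
    (hj : DifferentiableAt ℝ j (f s)) (hgs : g s ≠ 0) (hs : 0 < s) (hf's : deriv f s ≠ 0)
    (hsol : SolvesPHarmonic n p g j f) :
    HasDerivAt (pFlux n p g j f) (pFluxSource n p g j f s) s := by
  have hE := energyDensitySq_pos (n := n) (g := g) (j := j) hf's
  have h := ((hg.hasDerivAt.pow n).mul ((hasDerivAt_energyDensitySq hf hf' hg hj hgs).rpow_const
    (p := (p - 2) / 2) (Or.inl hE.ne'))).mul hf'.hasDerivAt
  have hpow : (n : ℝ) * g s ^ (n - 1) = n * g s ^ n / g s := by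
    cases n with
    | zero => simp
    | succ m => field_simp; simp [pow_succ]
  have ode := hsol s hs hE
  refine (h : HasDerivAt (pFlux n p g j f) _ s).congr_deriv ?_
  simp only [pFluxSource, Pi.pow_apply, Pi.mul_apply]
  rw [rpow_sub_one hE.ne', hpow]
  generalize g s ^ n = G at *
  generalize energyDensitySq n g j f s ^ ((p - 2) / 2) = X at *
  field_simp at ode ⊢
  linear_combination (G * X) * ode

lemma hasDerivAt_pFlux_of_contDiffOn (hg : ContDiffOn ℝ 1 g (Ioi 0))
    (hj : ContDiffOn ℝ 1 j (Ioi 0)) (hf : ContDiffOn ℝ 2 f (Ioi 0)) (hs : 0 < s)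
    (hgs : 0 < g s) (hfs : 0 < f s) (hf's : deriv f s ≠ 0) (hsol : SolvesPHarmonic n p g j f) :
    HasDerivAt (pFlux n p g j f) (pFluxSource n p g j f s) s :=
  have hdiff {k : WithTop ℕ∞} {φ : ℝ → ℝ} {t : ℝ} (hφ : ContDiffOn ℝ k φ (Ioi 0))
      (hk : k ≠ 0) (ht : 0 < t) : DifferentiableAt ℝ φ t :=
    (hφ.differentiableOn hk).differentiableAt (Ioi_mem_nhds ht)
  hasDerivAt_pFlux (hdiff hf two_ne_zero hs)
    (hdiff (hf.deriv_of_isOpen isOpen_Ioi (by norm_num)) one_ne_zero hs)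
    (hdiff hg one_ne_zero hs) (hdiff hj one_ne_zero hfs) hgs.ne' hs hf's hsol

lemma pFluxSource_le {c δ a C : ℝ} (hp : 2 < p) (hpn : (n : ℝ) < p) (hpn₁ : p < n + 1)
    (hc : 0 < c) (hs : 0 < s) (hgs : c * s ^ δ ≤ g s) (hg1 : 1 ≤ g s) (hf' : 0 < deriv f s)
    (hj₀ : 0 ≤ j (f s)) (hjJ : j (f s) ≤ C) (hj'₀ : 0 ≤ deriv j (f s))
    (hj'a : deriv j (f s) ≤ a) :
    pFluxSource n p g j f s ≤ (pFlux n p g j f s + 1) ^ ((p - 2) / (p - 1)) *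
      (n * (C * a) * (2 ^ ((p - 2) / 2) * (1 + (n * C ^ 2) ^ ((p - 2) / 2))) *
        c ^ ((n : ℝ) - p) * s ^ (δ * (n - p))) := by
  have hC : 0 ≤ C := hj₀.trans hjJ
  have ha : 0 ≤ a := hj'₀.trans hj'a
  have hE := pow_div_sq_mul_rpow_le (C := n * C ^ 2) hp hpn₁.le hg1 hf' (by positivity)
    (sq_deriv_le_energyDensitySq (n := n)) (energyDensitySq_le (n := n) hj₀ hjJ)
  have hgrow : g s ^ ((n : ℝ) - p) ≤ c ^ ((n : ℝ) - p) * s ^ (δ * (n - p)) := by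
    rw [rpow_mul hs.le, ← mul_rpow hc.le (by positivity)]
    exact rpow_le_rpow_of_nonpos (by positivity) hgs (by linarith)
  have hg0 := one_pos.trans_le hg1
  have := energyDensitySq_pos (n := n) (g := g) (j := j) hf'.ne'
  have := pFlux_pos (n := n) (p := p) (j := j) hg0 hf'
  calc pFluxSource n p g j f s
      = n * (j (f s) * deriv j (f s)) *
          (g s ^ n / g s ^ 2 * energyDensitySq n g j f s ^ ((p - 2) / 2)) := by
        unfold pFluxSource; ring
    _ ≤ n * (C * a) * (2 ^ ((p - 2) / 2) * (1 + (n * C ^ 2) ^ ((p - 2) / 2)) *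
        (pFlux n p g j f s + 1) ^ ((p - 2) / (p - 1)) * g s ^ ((n : ℝ) - p)) :=
        mul_le_mul (mul_le_mul_of_nonneg_left (mul_le_mul hjJ hj'a hj'₀ hC) n.cast_nonneg)
          hE (by positivity) (by positivity)
    _ ≤ n * (C * a) * (2 ^ ((p - 2) / 2) * (1 + (n * C ^ 2) ^ ((p - 2) / 2)) *
        (pFlux n p g j f s + 1) ^ ((p - 2) / (p - 1)) *
          (c ^ ((n : ℝ) - p) * s ^ (δ * (n - p)))) := by
        gcongr
    _ = _ := by ring

lemma monotoneOn_pFlux (hg : ContDiffOn ℝ 1 g (Ioi 0)) (hj : ContDiffOn ℝ 1 j (Ioi 0))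
    (hf : ContDiffOn ℝ 2 f (Ioi 0)) (hgpos : ∀ s > (0:ℝ), 0 < g s)
    (hjpos : ∀ t > (0:ℝ), 0 < j t) (hj' : ∀ t > (0:ℝ), 0 < deriv j t)
    (hfpos : ∀ s > (0:ℝ), 0 < f s) (hf'pos : ∀ s > (0:ℝ), 0 < deriv f s)
    (hsol : SolvesPHarmonic n p g j f) : MonotoneOn (pFlux n p g j f) (Ioi 0) := by
  have hQ' := fun s (hs : 0 < s) => hasDerivAt_pFlux_of_contDiffOn hg hj hf hs (hgpos s hs)
    (hfpos s hs) (hf'pos s hs).ne' hsol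
  refine monotoneOn_of_deriv_nonneg (convex_Ioi 0)
    (fun s hs => (hQ' s hs).continuousAt.continuousWithinAt) (fun s hs => ?_) (fun s hs => ?_)
  all_goals rw [interior_Ioi] at hs
  · exact (hQ' s hs).differentiableAt.differentiableWithinAt
  · rw [(hQ' s hs).deriv]
    exact pFluxSource_nonneg (hgpos s hs) (hf'pos s hs).ne' (hjpos _ (hfpos s hs)).le
      (hj' _ (hfpos s hs)).le

lemma exists_eventually_pFluxSource_le {a C δ : ℝ} (hp : 2 < p) (hpn : (n : ℝ) < p)
    (hpn₁ : p < n + 1) (hC : 0 < C) (hδ : 0 < δ) (hj : ContDiffOn ℝ 1 j (Ioi 0))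
    (hjpos : ∀ t > (0:ℝ), 0 < j t) (hj' : ∀ t > (0:ℝ), 0 < deriv j t ∧ deriv j t ≤ a)
    (hg : Tendsto (fun s => g s / (C * s ^ δ)) atTop (𝓝 1))
    (hfbdd : ∃ B, ∀ s ≥ (0:ℝ), |f s| ≤ B) (hfpos : ∀ s > (0:ℝ), 0 < f s)
    (hf'pos : ∀ s > (0:ℝ), 0 < deriv f s) :
    ∃ K, 0 ≤ K ∧ ∀ᶠ s in atTop, pFluxSource n p g j f s ≤
      (pFlux n p g j f s + 1) ^ ((p - 2) / (p - 1)) * (K * s ^ (δ * (n - p))) := by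
  obtain ⟨B, hB⟩ := hfbdd
  have hB₀ : 0 < B := (hfpos 1 one_pos).trans_le (abs_le.1 (hB 1 zero_le_one)).2
  have hjmono : MonotoneOn j (Ioi 0) := (strictMonoOn_of_deriv_pos (convex_Ioi 0)
    hj.continuousOn fun t ht => (hj' t (by rwa [interior_Ioi] at ht)).1).monotoneOn
  have hjB : ∀ s > (0:ℝ), j (f s) ≤ j B := fun s hs =>
    have hfB := (abs_le.1 (hB s hs.le)).2
    hjmono (hfpos s hs) ((hfpos s hs).trans_le hfB) hfB
  have ha : 0 ≤ a := (hj' 1 one_pos).1.le.trans (hj' 1 one_pos).2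
  have := hjpos B hB₀
  refine ⟨n * (j B * a) * (2 ^ ((p - 2) / 2) * (1 + (n * j B ^ 2) ^ ((p - 2) / 2))) *
    (C / 2) ^ ((n : ℝ) - p), by positivity, ?_⟩
  filter_upwards [eventually_half_mul_rpow_le_of_tendsto_div hC hδ hg, eventually_gt_atTop 0]
    with s ⟨hgs, hg1⟩ hs
  have hj's := hj' _ (hfpos s hs)
  exact pFluxSource_le hp hpn hpn₁ (half_pos hC) hs hgs hg1 (hf'pos s hs)
    (hjpos _ (hfpos s hs)).le (hjB s hs) hj's.1.le hj's.2

end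

theorem finite_positive_limit_general (n : ℕ) (p a C₁ δ : ℝ) (g j f : ℝ → ℝ)
    (hp₁ : max 2 (n : ℝ) < p) (hp₂ : p < (n : ℝ) + 1)
    (hC₁ : 0 < C₁) (hδ : (p - (n : ℝ))⁻¹ < δ)
    (hg : ContDiffOn ℝ 1 g (Set.Ioi 0)) (hj : ContDiffOn ℝ 1 j (Set.Ioi 0))
    (hgpos : ∀ s > (0:ℝ), 0 < g s) (hjpos : ∀ t > (0:ℝ), 0 < j t)
    (hj' : ∀ t > (0:ℝ), 0 < deriv j t ∧ deriv j t ≤ a)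
    (hgasym : Tendsto (fun s => g s / (C₁ * s ^ δ)) atTop (𝓝 1))
    (hf : ContDiffOn ℝ 2 f (Set.Ici 0))
    (hfbdd : ∃ B, ∀ s ≥ (0:ℝ), |f s| ≤ B)
    (hfpos : ∀ s > (0:ℝ), 0 < f s) (hf'pos : ∀ s > (0:ℝ), 0 < deriv f s)
    (hsol : SolvesPHarmonic n p g j f) :
    ∃ P : ℝ, 0 < P ∧
      Tendsto (fun s : ℝ => g s ^ n * (energyDensitySq n g j f s) ^ ((p - 2) / 2) * deriv f s)
        atTop (𝓝 P) ∧
      Tendsto (fun s : ℝ => deriv f s * (energyDensitySq n g j f s) ^ ((p - 2) / 2) * g s ^ n / P)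
        atTop (𝓝 1) := by
  have hp : 2 < p := (le_max_left _ _).trans_lt hp₁
  have hpn : (n : ℝ) < p := (le_max_right _ _).trans_lt hp₁
  have he : δ * (n - p) < -1 := by
    have := (inv_lt_iff_one_lt_mul₀ (sub_pos.2 hpn)).1 hδ
    linarith
  have hδ₀ : 0 < δ := (inv_pos.2 (sub_pos.2 hpn)).trans hδ
  have hf₀ := hf.mono Ioi_subset_Ici_self
  obtain ⟨K, hK, hsource⟩ := exists_eventually_pFluxSource_le hp hpn hp₂ hC₁ hδ₀ hj hjpos
    hj' hgasym hfbdd hfpos hf'pos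
  obtain ⟨s₀, hs₀⟩ := (hsource.and (eventually_gt_atTop 0)).exists_forall_of_atTop
  have hs₀pos : 0 < s₀ := (hs₀ s₀ le_rfl).2
  have hbdd : BddAbove (pFlux n p g j f '' Ici s₀) :=
    bddAbove_image_Ici_of_hasDerivAt_le_add_one_rpow_mul_rpow
      ((div_lt_one (by linarith)).2 (by linarith)) hK he hs₀pos
      (fun s hs => have hs := (hs₀ s hs).2
        hasDerivAt_pFlux_of_contDiffOn hg hj hf₀ hs (hgpos s hs) (hfpos s hs) (hf'pos s hs).ne'
          hsol)
      (fun s hs => (pFlux_pos (hgpos s (hs₀ s hs).2) (hf'pos s (hs₀ s hs).2)).le)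
      fun s hs => (hs₀ s hs).1
  have hlim := ((monotoneOn_pFlux hg hj hf₀ hgpos hjpos (fun t ht => (hj' t ht).1) hfpos hf'pos
    hsol).mono (Ici_subset_Ioi.2 hs₀pos)).tendsto_atTop_csSup_image_Ici hbdd
  have hP := (pFlux_pos (hgpos s₀ hs₀pos) (hf'pos s₀ hs₀pos)).trans_le
    (le_csSup hbdd (mem_image_of_mem _ self_mem_Ici))
  refine ⟨_, hP, hlim, ?_⟩
  have hratio := hlim.div_const (sSup (pFlux n p g j f '' Ici s₀))
  rw [div_self hP.ne'] at hratio
  exact hratio.congr fun s => by unfold pFlux; ring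

/-- Under hypotheses (H), the limit `P = lim_{s→∞} gⁿ(s)·|dF|^{p-2}(s)·f'(s)` exists, is
finite and positive; consequently `f'(s) ~ P · |dF|^{2-p}(s) · g⁻ⁿ(s)` as `s → +∞`. -/
theorem finite_positive_limit (n : ℕ) (p a C₁ δ : ℝ) (g j f : ℝ → ℝ)
    (hn : 2 ≤ n) (hp₁ : max 2 (n : ℝ) < p) (hp₂ : p < (n : ℝ) + 1)
    (ha : 0 < a) (hC₁ : 0 < C₁) (hδ : (p - (n : ℝ))⁻¹ < δ)
    (hg : ContDiffOn ℝ 1 g (Set.Ioi 0)) (hj : ContDiffOn ℝ 1 j (Set.Ioi 0))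
    (hg0 : g 0 = 0) (hj0 : j 0 = 0)
    (hg'0 : HasDerivWithinAt g 1 (Set.Ici 0) 0) (hj'0 : HasDerivWithinAt j 1 (Set.Ici 0) 0)
    (hgpos : ∀ s > (0:ℝ), 0 < g s) (hjpos : ∀ t > (0:ℝ), 0 < j t)
    (hj' : ∀ t > (0:ℝ), 0 < deriv j t ∧ deriv j t ≤ a)
    (hg' : ∀ᶠ s in atTop, 0 < deriv g s)
    (hgasym : Tendsto (fun s => g s / (C₁ * s ^ δ)) atTop (𝓝 1))
    (hf : ContDiffOn ℝ 2 f (Set.Ici 0))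
    (hfbdd : ∃ B, ∀ s ≥ (0:ℝ), |f s| ≤ B)
    (hf0 : f 0 = 0)
    (hfpos : ∀ s > (0:ℝ), 0 < f s) (hf'pos : ∀ s > (0:ℝ), 0 < deriv f s)
    (hsol : SolvesPHarmonic n p g j f) :
    ∃ P : ℝ, 0 < P ∧
      Tendsto (fun s : ℝ => g s ^ n * (energyDensitySq n g j f s) ^ ((p - 2) / 2) * deriv f s)
        atTop (𝓝 P) ∧
      Tendsto (fun s : ℝ => deriv f s * (energyDensitySq n g j f s) ^ ((p - 2) / 2) * g s ^ n / P)
        atTop (𝓝 1) :=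
  finite_positive_limit_general n p a C₁ δ g j f hp₁ hp₂ hC₁ hδ hg hj hgpos hjpos hj' hgasym hf
    hfbdd hfpos hf'pos hsol
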